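/- For all nonnegative integers k₁, k₂ with k₁+k₂ = k, there exist a nonzero constant c ∈ ℂ and an element a ∈ U(𝔫̄) such that x_{α₁}(−2)^{k₂+1} · x_{α₁}(−1)^{k₁} = c·R¹_{−1,2(k₂+1)+k₁} + a·x_{α₁}(−1)^{k₁+1}. -/

import Mathlib

/-!
Inside `U(𝔫̄)` the elements `x_{α₁}(m)` commute, so `R¹_{-1,t}` may be computed in a
commutative ring. Writing `m_j = -1 - n_j`, the tuples `n` with `∑ n_j = k₂ + 1` and all
`n_j ≤ 1` each contribute `x_{α₁}(-2)^{k₂+1} x_{α₁}(-1)^{k₁}`, and there is at least one of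
them; any other tuple has at most `k₂` nonzero entries, hence at least `k₁ + 1` entries equal
to `0`, and its monomial is a multiple of `x_{α₁}(-1)^{k₁+1}`. Dividing by the number of
tuples of the first kind gives the identity.
-/

/- Setup: the nilpotent subalgebra 𝔫 ⊂ 𝔰𝔩(3,ℂ) spanned by E₁₂, E₂₃, E₁₃, its loop
algebra 𝔫̄ = 𝔫 ⊗ ℂ[t,t⁻¹], and the universal enveloping algebra U(𝔫̄). -/

noncomputable section
open scoped TensorProduct
attribute [local instance 100] LieRing.ofAssociativeRing

namespace PrincipalSubspaceSL3

/-- 3×3 complex matrices. -/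
abbrev gl3 : Type := Matrix (Fin 3) (Fin 3) ℂ

/-- The root vectors: `Egen 0 = x_{α₁} = E₁₂`, `Egen 1 = x_{α₂} = E₂₃`,
`Egen 2 = x_{α₁+α₂} = E₁₃`. -/
def Egen : Fin 3 → gl3
  | 0 => Matrix.single 0 1 1
  | 1 => Matrix.single 1 2 1
  | 2 => Matrix.single 0 2 1

lemma egen_lie_mem :
    ∀ x ∈ Submodule.span ℂ (Set.range Egen), ∀ y ∈ Submodule.span ℂ (Set.range Egen),
      ⁅x, y⁆ ∈ Submodule.span ℂ (Set.range Egen) := by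
  have key : ∀ a b : Fin 3, ⁅Egen a, Egen b⁆ ∈ Submodule.span ℂ (Set.range Egen) := by
    intro a b
    fin_cases a <;> fin_cases b <;>
      simp only [Egen, Ring.lie_def, Matrix.single_mul_single_same,
        Matrix.single_mul_single_of_ne, Fin.reduceEq, ne_eq, not_false_eq_true,
        one_mul, sub_zero, zero_sub, sub_self] <;>
      first
        | exact Submodule.zero_mem _
        | exact Submodule.subset_span ⟨2, rfl⟩
        | exact Submodule.neg_mem _ (Submodule.subset_span ⟨2, rfl⟩)
  intro x hx
  induction hx using Submodule.span_induction with
  | mem x hxs =>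
      obtain ⟨a, rfl⟩ := hxs
      intro y hy
      induction hy using Submodule.span_induction with
      | mem y hys => obtain ⟨b, rfl⟩ := hys; exact key a b
      | zero => simp
      | add y z hy hz hy' hz' => rw [lie_add]; exact Submodule.add_mem _ hy' hz'
      | smul c y hy hy' => rw [lie_smul]; exact Submodule.smul_mem _ _ hy'
  | zero => intro y hy; simp
  | add x z hx hz hx' hz' =>
      intro y hy; rw [add_lie]; exact Submodule.add_mem _ (hx' y hy) (hz' y hy)
  | smul c x hx hx' =>
      intro y hy; rw [smul_lie]; exact Submodule.smul_mem _ _ (hx' y hy)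

/-- The nilpotent Lie subalgebra 𝔫 = ℂE₁₂ ⊕ ℂE₂₃ ⊕ ℂE₁₃ of 𝔰𝔩(3,ℂ). -/
def nn : LieSubalgebra ℂ gl3 :=
  { Submodule.span ℂ (Set.range Egen) with
    lie_mem' := fun {x y} hx hy => egen_lie_mem x hx y hy }

/-- Laurent polynomials ℂ[t, t⁻¹]. -/
abbrev A : Type := LaurentPolynomial ℂ

/-- The loop algebra 𝔫̄ = 𝔫 ⊗ ℂ[t,t⁻¹]. -/
abbrev nbar : Type := A ⊗[ℂ] nn

set_option synthInstance.maxHeartbeats 1000000 in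
instance : LieAlgebra ℂ nbar where
  lie_smul c x y := by
    have h := lie_smul (algebraMap ℂ A c) x y
    rwa [algebraMap_smul, algebraMap_smul] at h

/-- The root vectors as elements of 𝔫. -/
def en (i : Fin 3) : nn := ⟨Egen i, Submodule.subset_span ⟨i, rfl⟩⟩

/-- `nx i m` is the element x_{α}(m) = x_α ⊗ tᵐ of 𝔫̄, where α is α₁, α₂, α₁+α₂
according to i = 0, 1, 2. -/
def nx (i : Fin 3) (m : ℤ) : nbar := LaurentPolynomial.T m ⊗ₜ[ℂ] en i

/-- The universal enveloping algebra U(𝔫̄). -/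
abbrev U : Type := UniversalEnvelopingAlgebra ℂ nbar

/-- `xg i m` is the element x_α(m) regarded inside U(𝔫̄). -/
def xg (i : Fin 3) (m : ℤ) : U := UniversalEnvelopingAlgebra.ι ℂ (nx i m)

/-- `Rtr k i t` = R^i_{-1,t} : the sum of x_{α_i}(m₁)⋯x_{α_i}(m_{k+1}) over all integer
tuples with every m_j ≤ -1 and m₁+⋯+m_{k+1} = -t (parametrized by m_j = -1 - n_j with
n : Fin (k+1) → ℕ, ∑ n = t - (k+1)).  Here i : Fin 2 refers to the simple root α_{i+1}. -/
def Rtr (k : ℕ) (i : Fin 2) (t : ℤ) : U :=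
  ∑ f ∈ Finset.Nat.antidiagonalTuple (k + 1) (t - (k + 1)).toNat,
    (List.ofFn fun j : Fin (k + 1) => xg i.castSucc (-1 - (f j : ℤ))).prod

/-- The left ideal J = Σ_{i,t≥k+1} U(𝔫̄)·R^i_{-1,t}. -/
def Jid (k : ℕ) : Submodule U U :=
  Submodule.span U {u : U | ∃ i : Fin 2, ∃ t : ℤ, (k : ℤ) + 1 ≤ t ∧ u = Rtr k i t}

/-- The left ideal U(𝔫̄)·𝔫̄₊, generated by the x_α(m) with m ≥ 0. -/
def nplusIdeal : Submodule U U :=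
  Submodule.span U {u : U | ∃ i : Fin 3, ∃ m : ℤ, 0 ≤ m ∧ u = xg i m}

/-- The left ideal I_{kΛ₀} = J + U(𝔫̄)·𝔫̄₊. -/
def IkL0 (k : ℕ) : Submodule U U := Jid k ⊔ nplusIdeal

/-- The left ideal I_{k₀Λ₀+k₁Λ₁+k₂Λ₂} = I_{kΛ₀} + U·x_{α₁}(-1)^{k₀+k₂+1}
+ U·x_{α₂}(-1)^{k₀+k₁+1} + U·x_{α₁+α₂}(-1)^{k₀+1} (with k = k₀+k₁+k₂). -/
def Iwt (k k0 k1 k2 : ℕ) : Submodule U U :=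
  IkL0 k ⊔ Submodule.span U {xg 0 (-1) ^ (k0 + k2 + 1)}
    ⊔ Submodule.span U {xg 1 (-1) ^ (k0 + k1 + 1)}
    ⊔ Submodule.span U {xg 2 (-1) ^ (k0 + 1)}

end PrincipalSubspaceSL3

open Finset

lemma card_filter_ne_zero_lt_sum {ι : Type*} [Fintype ι] [DecidableEq ι] {f : ι → ℕ}
    (h : ∃ j, 1 < f j) : #{j | f j ≠ 0} < ∑ j, f j := by
  obtain ⟨j, hj⟩ := h
  rw [← sum_filter_ne_zero, card_eq_sum_ones]
  exact sum_lt_sum (fun i hi => Nat.one_le_iff_ne_zero.mpr (mem_filter.mp hi).2)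
    ⟨j, mem_filter.mpr ⟨mem_univ j, by omega⟩, by omega⟩

section
variable {ι M : Type*} [Fintype ι] (y : ℕ → M)

lemma prod_comp_eq_of_le_one [CommMonoid M] {f : ι → ℕ} (hf : ∀ j, f j ≤ 1) :
    ∏ j, y (f j) = y 1 ^ (∑ j, f j) * y 0 ^ (Fintype.card ι - ∑ j, f j) := by
  have hy : ∀ j, y (f j) = y 1 ^ f j * y 0 ^ (1 - f j) := fun j => by
    rcases Nat.le_one_iff_eq_zero_or_eq_one.mp (hf j) with h | h <;> simp [h]
  have hcard : ∑ j, (1 - f j) = Fintype.card ι - ∑ j, f j := by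
    have : ∑ j, (1 - f j) + ∑ j, f j = Fintype.card ι := by
      rw [← sum_add_distrib, ← Finset.card_univ, card_eq_sum_ones]
      exact sum_congr rfl fun j _ => Nat.sub_add_cancel (hf j)
    omega
  rw [prod_congr rfl fun j _ => hy j, prod_mul_distrib, prod_pow_eq_pow_sum,
    prod_pow_eq_pow_sum, hcard]

lemma pow_card_filter_eq_zero_dvd_prod [CommMonoid M] [DecidableEq ι] (f : ι → ℕ) :
    y 0 ^ #{j | f j = 0} ∣ ∏ j, y (f j) := by
  rw [← prod_filter_mul_prod_filter_not univ (f · = 0),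
    prod_congr rfl fun j hj => by rw [(mem_filter.mp hj).2], prod_const]
  exact dvd_mul_right _ _

end

lemma exists_mem_antidiagonalTuple_le_one {k n : ℕ} (h : n ≤ k) :
    ∃ f ∈ Nat.antidiagonalTuple k n, ∀ j, f j ≤ 1 := by
  classical
  obtain ⟨s, -, hs⟩ := exists_subset_card_eq (s := (univ : Finset (Fin k))) (by simpa using h)
  refine ⟨fun j => if j ∈ s then 1 else 0, ?_, fun j => by dsimp only; split_ifs <;> simp⟩
  rw [Nat.mem_antidiagonalTuple, sum_boole, filter_mem_eq_inter, univ_inter, hs]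
  rfl

theorem exists_sum_antidiagonalTuple_prod_eq {R : Type*} [CommSemiring R] (y : ℕ → R)
    (k₁ k₂ : ℕ) :
    ∃ N : ℕ, N ≠ 0 ∧ ∃ b : R,
      ∑ f ∈ Nat.antidiagonalTuple (k₁ + k₂ + 1) (k₂ + 1), ∏ j, y (f j)
        = N • (y 1 ^ (k₂ + 1) * y 0 ^ k₁) + b * y 0 ^ (k₁ + 1) := by
  classical
  set D := Nat.antidiagonalTuple (k₁ + k₂ + 1) (k₂ + 1)
  have hgood : ∀ f ∈ {f ∈ D | ∀ j, f j ≤ 1}, ∏ j, y (f j) = y 1 ^ (k₂ + 1) * y 0 ^ k₁ := by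
    intro f hf
    obtain ⟨hD, hle⟩ := mem_filter.mp hf
    rw [prod_comp_eq_of_le_one y hle, Nat.mem_antidiagonalTuple.mp hD, Fintype.card_fin]
    congr 2
    omega
  have hbad : ∀ f ∈ {f ∈ D | ¬∀ j, f j ≤ 1}, y 0 ^ (k₁ + 1) ∣ ∏ j, y (f j) := by
    intro f hf
    obtain ⟨hD, hle⟩ := mem_filter.mp hf
    have hlt := card_filter_ne_zero_lt_sum (f := f) (by simpa using hle)
    have hcard := card_filter_add_card_filter_not (s := univ) (f · = 0)
    rw [Nat.mem_antidiagonalTuple.mp hD] at hlt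
    simp only [ne_eq] at hlt
    rw [card_univ, Fintype.card_fin] at hcard
    exact (pow_dvd_pow _ (by omega)).trans (pow_card_filter_eq_zero_dvd_prod y f)
  obtain ⟨b, hb⟩ := dvd_sum hbad
  obtain ⟨f, hfD, hf⟩ := exists_mem_antidiagonalTuple_le_one (by omega : k₂ + 1 ≤ k₁ + k₂ + 1)
  refine ⟨#{f ∈ D | ∀ j, f j ≤ 1}, card_ne_zero_of_mem (mem_filter.mpr ⟨hfD, hf⟩), b, ?_⟩
  rw [← sum_filter_add_sum_filter_not D (fun f => ∀ j, f j ≤ 1), sum_congr rfl hgood,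
    sum_const, hb, mul_comm _ b]

namespace PrincipalSubspaceSL3

lemma xg_zero_mul_comm (m p : ℤ) : xg 0 m * xg 0 p = xg 0 p * xg 0 m := by
  have h : ⁅nx 0 m, nx 0 p⁆ = 0 := by
    rw [nx, nx, LieAlgebra.ExtendScalars.bracket_tmul, lie_self, TensorProduct.tmul_zero]
  have h' : ⁅xg 0 m, xg 0 p⁆ = 0 := by
    rw [xg, xg, ← LieHom.map_lie, h, map_zero]
  exact sub_eq_zero.mp (by rwa [Ring.lie_def] at h')

def alpha1Subalgebra : Subalgebra ℂ U := Algebra.adjoin ℂ (Set.range (xg 0))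

instance : IsMulCommutative alpha1Subalgebra :=
  Algebra.isMulCommutative_adjoin ℂ (by rintro _ ⟨m, rfl⟩ _ ⟨p, rfl⟩; exact xg_zero_mul_comm m p)

open scoped IsMulCommutative

def alpha1Gen (m : ℤ) : alpha1Subalgebra := ⟨xg 0 m, Algebra.subset_adjoin ⟨m, rfl⟩⟩

lemma val_alpha1Gen (m : ℤ) : alpha1Subalgebra.val (alpha1Gen m) = xg 0 m := rfl

lemma Rtr_zero_eq (k : ℕ) (t : ℤ) :
    Rtr k 0 t = alpha1Subalgebra.val
      (∑ f ∈ Nat.antidiagonalTuple (k + 1) (t - (k + 1)).toNat, ∏ j, alpha1Gen (-1 - f j)) := by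
  rw [Rtr, map_sum]
  refine sum_congr rfl fun f _ => ?_
  rw [← List.prod_ofFn, map_list_prod, List.map_ofFn]
  rfl

theorem statement17_general (k : ℕ) (k1 k2 : ℕ) (hsum : k1 + k2 = k) :
    ∃ c : ℂ, c ≠ 0 ∧ ∃ a : U,
      xg 0 (-2) ^ (k2 + 1) * xg 0 (-1) ^ k1
        = c • Rtr k 0 ((2 * (k2 + 1) + k1 : ℕ) : ℤ) + a * xg 0 (-1) ^ (k1 + 1) := by
  subst hsum
  obtain ⟨N, hN, b, hb⟩ :=
    exists_sum_antidiagonalTuple_prod_eq (fun n => alpha1Gen (-1 - n)) k1 k2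
  have hR : Rtr (k1 + k2) 0 ((2 * (k2 + 1) + k1 : ℕ) : ℤ)
      = N • (xg 0 (-2) ^ (k2 + 1) * xg 0 (-1) ^ k1)
        + alpha1Subalgebra.val b * xg 0 (-1) ^ (k1 + 1) := by
    have ht : (((2 * (k2 + 1) + k1 : ℕ) : ℤ) - ((k1 + k2 : ℕ) + 1)).toNat = k2 + 1 := by omega
    rw [Rtr_zero_eq, ht, hb]
    simp only [map_add, map_nsmul, map_mul, map_pow, val_alpha1Gen]
    norm_num
  have hN' : (N : ℂ) ≠ 0 := Nat.cast_ne_zero.mpr hN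
  refine ⟨(N : ℂ)⁻¹, inv_ne_zero hN', -((N : ℂ)⁻¹ • alpha1Subalgebra.val b), ?_⟩
  rw [hR, smul_add, ← Nat.cast_smul_eq_nsmul ℂ, smul_smul, inv_mul_cancel₀ hN', one_smul,
    neg_mul, smul_mul_assoc, add_neg_cancel_right]

/-- for k₁+k₂ = k there are a nonzero c ∈ ℂ and a ∈ U(𝔫̄) with
x_{α₁}(−2)^{k₂+1}·x_{α₁}(−1)^{k₁} = c·R¹_{−1,2(k₂+1)+k₁} + a·x_{α₁}(−1)^{k₁+1}. -/
theorem statement17 (k : ℕ) (hk : 0 < k) (k1 k2 : ℕ) (hsum : k1 + k2 = k) :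
    ∃ c : ℂ, c ≠ 0 ∧ ∃ a : U,
      xg 0 (-2) ^ (k2 + 1) * xg 0 (-1) ^ k1
        = c • Rtr k 0 ((2 * (k2 + 1) + k1 : ℕ) : ℤ) + a * xg 0 (-1) ^ (k1 + 1) :=
  statement17_general k k1 k2 hsum

end PrincipalSubspaceSL3
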